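/- For every n ≥ 1, every model f : (Fin n → ℝ) → ℝ, and all points x, r ∈ ℝⁿ, the interventional Shapley attributions satisfy the efficiency axiom: ∑_{i ∈ Fin n} BS_i(f,x,r) = f(x) − f(r). -/

import Mathlib

def patch {n : ℕ} (x r : Fin n → ℝ) (S : Finset (Fin n)) : Fin n → ℝ :=
  fun j => if j ∈ S then x j else r j

noncomputable def BS {n : ℕ} (f : (Fin n → ℝ) → ℝ) (x r : Fin n → ℝ) (i : Fin n) : ℝ :=
  ∑ S ∈ (Finset.univ.erase i).powerset,
    ((S.card.factorial * (n - S.card - 1).factorial : ℝ) / (n.factorial : ℝ)) *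
      (f (patch x r (insert i S)) - f (patch x r S))

/-!
Expand every `BS i` as a combination of the values `f (patch x r T)` over all coalitions `T`. In
the sum over `i`, the coefficient of `f (patch x r T)` is `|T| w(|T| - 1) - (n - |T|) w(|T|)` with
`w(k) = k! (n - k - 1)! / n!`. Both products equal `|T|! (n - |T|)! / n!`, the first unless
`T = ∅` and the second unless `T = univ`, so everything cancels except `f x - f r`.
-/

open Finset

noncomputable def shapleyWeight (n k : ℕ) : ℝ :=
  (k.factorial * (n - k - 1).factorial : ℝ) / (n.factorial : ℝ)

theorem natCast_mul_shapleyWeight_pred {n k : ℕ} (hk : k ≠ 0) :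
    k * shapleyWeight n (k - 1) = (k.factorial * (n - k).factorial : ℝ) / n.factorial := by
  have hsub : n - (k - 1) - 1 = n - k := by omega
  rw [shapleyWeight, hsub, ← Nat.mul_factorial_pred hk]
  push_cast
  ring

theorem sub_mul_shapleyWeight {n k : ℕ} (hk : k < n) :
    ((n - k : ℕ) : ℝ) * shapleyWeight n k = (k.factorial * (n - k).factorial : ℝ) / n.factorial := by
  rw [shapleyWeight, ← Nat.mul_factorial_pred (Nat.sub_ne_zero_of_lt hk)]
  push_cast
  ring

theorem shapleyWeight_telescope {n k : ℕ} (hk : k ≤ n) :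
    k * shapleyWeight n (k - 1) - ((n - k : ℕ) : ℝ) * shapleyWeight n k
      = (if k = n then 1 else 0) - (if k = 0 then 1 else 0) := by
  have hn : (n.factorial : ℝ) ≠ 0 := by positivity
  rcases Nat.eq_zero_or_pos k with rfl | hk0 <;> rcases hk.eq_or_lt with rfl | hkn
  · simp
  · rw [sub_mul_shapleyWeight hkn]
    simp [hn, hkn.ne]
  · rw [natCast_mul_shapleyWeight_pred hk0.ne']
    simp [hn, hk0.ne']
  · rw [natCast_mul_shapleyWeight_pred hk0.ne', sub_mul_shapleyWeight hkn]
    simp [hk0.ne', hkn.ne]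

section Games

variable {ι R : Type*} [Fintype ι] [DecidableEq ι]

noncomputable def shapleyValue (g : Finset ι → ℝ) (i : ι) : ℝ :=
  ∑ S ∈ (univ.erase i).powerset, shapleyWeight (Fintype.card ι) #S * (g (insert i S) - g S)

theorem sum_powerset_erase_mul_sub_insert [Ring R] (c : ℕ → R) (g : Finset ι → R) (i : ι) :
    ∑ S ∈ (univ.erase i).powerset, c #S * (g (insert i S) - g S)
      = ∑ T, (if i ∈ T then c (#T - 1) else -c #T) * g T := by
  have hsplit := sum_powerset_insert (notMem_erase i univ)
    fun T => (if i ∈ T then c (#T - 1) else -c #T) * g T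
  rw [insert_erase (mem_univ i), powerset_univ] at hsplit
  rw [hsplit, ← sum_add_distrib]
  refine sum_congr rfl fun S hS => ?_
  have hiS : i ∉ S := fun h => notMem_erase i univ (mem_powerset.1 hS h)
  simp only [hiS, if_false, mem_insert_self, if_true, card_insert_of_notMem hiS,
    Nat.add_sub_cancel]
  noncomm_ring

theorem sum_ite_mem_univ [AddCommMonoid R] (T : Finset ι) (a b : R) :
    ∑ i, (if i ∈ T then a else b) = #T • a + (Fintype.card ι - #T) • b := by
  rw [sum_ite, sum_const, sum_const, filter_not, filter_mem_eq_of_subset (subset_univ T),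
    ← compl_eq_univ_sdiff, card_compl]

theorem sum_shapleyValue (g : Finset ι → ℝ) : ∑ i, shapleyValue g i = g univ - g ∅ := by
  set w := shapleyWeight (Fintype.card ι)
  calc ∑ i, shapleyValue g i
      = ∑ T, ∑ i, (if i ∈ T then w (#T - 1) else -w #T) * g T := by
        simp_rw [shapleyValue, sum_powerset_erase_mul_sub_insert]
        exact sum_comm
    _ = ∑ T, ((if T = univ then 1 else 0) - (if T = ∅ then 1 else 0)) * g T := by
        refine sum_congr rfl fun T _ => ?_
        rw [← sum_mul, sum_ite_mem_univ, nsmul_eq_mul, nsmul_eq_mul, mul_neg, ← sub_eq_add_neg,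
          shapleyWeight_telescope (card_le_univ T)]
        simp only [card_eq_iff_eq_univ, card_eq_zero]
    _ = g univ - g ∅ := by
        simp only [sub_mul, sum_sub_distrib, ite_mul, one_mul, zero_mul, Fintype.sum_ite_eq']

end Games

theorem patch_univ {n : ℕ} (x r : Fin n → ℝ) : patch x r univ = x :=
  funext fun j => if_pos (mem_univ j)

theorem patch_empty {n : ℕ} (x r : Fin n → ℝ) : patch x r ∅ = r :=
  funext fun j => if_neg (notMem_empty j)

theorem BS_eq_shapleyValue {n : ℕ} (f : (Fin n → ℝ) → ℝ) (x r : Fin n → ℝ) (i : Fin n) :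
    BS f x r i = shapleyValue (fun S => f (patch x r S)) i := by
  rw [shapleyValue, Fintype.card_fin]
  rfl

theorem BS_efficiency_general (n : ℕ) (f : (Fin n → ℝ) → ℝ) (x r : Fin n → ℝ) :
    ∑ i, BS f x r i = f x - f r := by
  simp_rw [BS_eq_shapleyValue, sum_shapleyValue, patch_univ, patch_empty]

theorem BS_efficiency (n : ℕ) (hn : 1 ≤ n) (f : (Fin n → ℝ) → ℝ) (x r : Fin n → ℝ) :
    ∑ i, BS f x r i = f x - f r :=
  BS_efficiency_general n f x r
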